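/- Let n be odd with at most two distinct prime divisors and least prime divisor p, and let G be the complement of the unitary Cayley graph on Z/nZ. Then ch(G) = χ(G) = n/p. -/

import Mathlib

/-!
Let `p ≤ q` be the (at most two) prime divisors of `n`. Two distinct residues are adjacent iff
their representatives `x, y < n` agree mod `p` or mod `q`, so the graph is a "row or column"
graph with rows `x % p`, columns `x % q`, and `φ x = x / p < n / p` is injective on every row
and every column. Orienting each row towards smaller `φ` and each column towards larger `φ` gives
a kernel-perfect digraph with out-degrees below `n / p` (Galvin), hence the graph is
`n / p`-choosable (Bondy–Boppana–Siegel). The multiples of `p` form a clique of size `n / p`.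
-/

open SimpleGraph

variable {V : Type*}

/-- `S` is a kernel of the subdigraph of `D` induced on `A`: `S ⊆ A`, `S` is independent,
and every vertex of `A` outside `S` has an out-neighbor in `S`. -/
def IsKernelOn (D : V → V → Prop) (A S : Set V) : Prop :=
  S ⊆ A ∧ (∀ x ∈ S, ∀ y ∈ S, ¬ D x y) ∧ ∀ v ∈ A, v ∉ S → ∃ w ∈ S, D v w

/-- A digraph is kernel-perfect if every induced subdigraph has a kernel. -/
def KernelPerfect (D : V → V → Prop) : Prop :=
  ∀ A : Set V, ∃ S : Set V, IsKernelOn D A S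

/-- `D` is an orientation of the simple graph `G`. -/
def IsOrientation (G : SimpleGraph V) (D : V → V → Prop) : Prop :=
  (∀ x y, D x y → G.Adj x y) ∧ (∀ x y, G.Adj x y → (D x y ↔ ¬ D y x))

/-- `G` is `k`-choosable: every assignment of lists of size `k` admits a proper coloring
from the lists. -/
def Choosable (G : SimpleGraph V) (k : ℕ) : Prop :=
  ∀ L : V → Finset ℕ, (∀ v, (L v).card = k) →
    ∃ c : V → ℕ, (∀ v, c v ∈ L v) ∧ ∀ ⦃x y⦄, G.Adj x y → c x ≠ c y

/-- The list chromatic number (choice number) of `G`. -/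
noncomputable def choiceNumber (G : SimpleGraph V) : ℕ :=
  sInf {k | Choosable G k}

/-- The unitary Cayley graph on `ZMod n`: `x ~ y` iff `x - y` is a unit. -/
def unitaryCayley (n : ℕ) : SimpleGraph (ZMod n) where
  Adj x y := x ≠ y ∧ IsUnit (x - y)
  symm := by
    constructor
    rintro x y ⟨h1, h2⟩
    refine ⟨h1.symm, ?_⟩
    rw [show y - x = -(x - y) by ring]
    exact h2.neg
  loopless := by constructor; rintro x ⟨h, _⟩; exact h rfl

open Finset

/-- Bondy–Boppana–Siegel: give the colour `a` to a kernel of the vertices whose list contains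
`a`; every other such vertex loses `a` from its list but also an out-neighbour, so the
degree condition persists on the remaining vertices. -/
theorem KernelPerfect.exists_listColoring {D : V → V → Prop} [DecidableRel D]
    (hD : KernelPerfect D) (L : V → Finset ℕ) (A : Finset V)
    (hL : ∀ v ∈ A, #{w ∈ A | D v w} < #(L v)) :
    ∃ col : V → ℕ, (∀ v ∈ A, col v ∈ L v) ∧ ∀ x ∈ A, ∀ y ∈ A, D x y → col x ≠ col y := by
  classical
  induction A using Finset.strongInduction generalizing L with
  | H A ih =>
  obtain rfl | ⟨v₀, hv₀⟩ := A.eq_empty_or_nonempty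
  · exact ⟨fun _ => 0, by simp, by simp⟩
  obtain ⟨a, ha⟩ := card_pos.1 ((Nat.zero_le _).trans_lt (hL v₀ hv₀))
  obtain ⟨S, hSB, hSind, hSabs⟩ := hD ↑{v ∈ A | a ∈ L v}
  have hSA : ∀ {v}, v ∈ S → v ∈ A ∧ a ∈ L v := fun hv => mem_filter.1 (hSB hv)
  obtain ⟨s, hs⟩ : S.Nonempty := by
    by_cases hv₀S : v₀ ∈ S
    · exact ⟨v₀, hv₀S⟩
    · obtain ⟨w, hw, -⟩ := hSabs v₀ (by simp [hv₀, ha]) hv₀S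
      exact ⟨w, hw⟩
  set A' := {v ∈ A | v ∉ S}
  have hA' : A' ⊂ A := filter_ssubset.2 ⟨s, (hSA hs).1, not_not.2 hs⟩
  have hL' : ∀ v ∈ A', #{w ∈ A' | D v w} < #((L v).erase a) := by
    intro v hv
    obtain ⟨hvA, hvS⟩ := mem_filter.1 hv
    have hsub : {w ∈ A' | D v w} ⊆ {w ∈ A | D v w} :=
      filter_subset_filter _ (filter_subset _ _)
    by_cases hav : a ∈ L v
    · obtain ⟨w, hwS, hvw⟩ := hSabs v (by simp [hvA, hav]) hvS
      have hw : w ∈ {w ∈ A | D v w} := mem_filter.2 ⟨(hSA hwS).1, hvw⟩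
      have hw' : w ∉ {w ∈ A' | D v w} := fun h => (mem_filter.1 (mem_filter.1 h).1).2 hwS
      have := card_lt_card ((ssubset_iff_of_subset hsub).2 ⟨w, hw, hw'⟩)
      rw [card_erase_of_mem hav]
      have := hL v hvA
      omega
    · rw [erase_eq_of_notMem hav]
      exact (card_le_card hsub).trans_lt (hL v hvA)
  obtain ⟨col, hcol, hproper⟩ := ih A' hA' (fun v => (L v).erase a) hL'
  refine ⟨fun v => if v ∈ S then a else col v, fun v hv => ?_, fun x hx y hy hxy => ?_⟩
  · by_cases hvS : v ∈ S
    · simpa [hvS] using (hSA hvS).2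
    · simpa [hvS] using mem_of_mem_erase (hcol v (mem_filter.2 ⟨hv, hvS⟩))
  · by_cases hxS : x ∈ S <;> by_cases hyS : y ∈ S <;> simp only [hxS, hyS, if_true, if_false]
    · exact absurd hxy (hSind x hxS y hyS)
    · exact (ne_of_mem_erase (hcol y (mem_filter.2 ⟨hy, hyS⟩))).symm
    · exact ne_of_mem_erase (hcol x (mem_filter.2 ⟨hx, hxS⟩))
    · exact hproper x (mem_filter.2 ⟨hx, hxS⟩) y (mem_filter.2 ⟨hy, hyS⟩) hxy

theorem choosable_of_kernelPerfect [Fintype V] {G : SimpleGraph V} {D : V → V → Prop}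
    [DecidableRel D] (hD : KernelPerfect D) (hGD : ∀ x y, G.Adj x y → D x y ∨ D y x) {k : ℕ}
    (hdeg : ∀ v, #{w | D v w} < k) : Choosable G k := by
  intro L hL
  obtain ⟨col, hcol, hproper⟩ := hD.exists_listColoring L univ (fun v _ => hL v ▸ hdeg v)
  refine ⟨col, fun v => hcol v (mem_univ v), fun x y hxy => ?_⟩
  rcases hGD x y hxy with h | h
  · exact hproper x (mem_univ x) y (mem_univ y) h
  · exact (hproper y (mem_univ y) x (mem_univ x) h).symm

namespace RowCol

variable {α β : Type*} (r : V → α) (c : V → β) (φ : V → ℕ)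

/-- Galvin's orientation: arcs run along a row towards smaller `φ` and along a column towards
larger `φ`. Two vertices sharing both their row and their column get arcs both ways. -/
def digraph (x y : V) : Prop :=
  x ≠ y ∧ (r x = r y ∧ φ y < φ x ∨ c x = c y ∧ φ x < φ y)

variable {r c φ}

theorem digraph_or_digraph (hr : (fun v => (r v, φ v)).Injective)
    (hc : (fun v => (c v, φ v)).Injective) {x y : V} (hxy : x ≠ y)
    (h : r x = r y ∨ c x = c y) : digraph r c φ x y ∨ digraph r c φ y x := by
  have hφ : φ x ≠ φ y := fun hφ => hxy <| h.elim
    (fun h => hr (Prod.ext h hφ)) (fun h => hc (Prod.ext h hφ))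
  rcases h with h | h <;> rcases hφ.lt_or_gt with hlt | hlt
  · exact .inr ⟨hxy.symm, .inl ⟨h.symm, hlt⟩⟩
  · exact .inl ⟨hxy, .inl ⟨h, hlt⟩⟩
  · exact .inl ⟨hxy, .inr ⟨h, hlt⟩⟩
  · exact .inr ⟨hxy.symm, .inr ⟨h.symm, hlt⟩⟩

/-- If some row-minimal vertex `v₀` has a vertex `u` below it in its column, a kernel of
`A \ {u}` also absorbs `u` (through `v₀`, or through the column out-neighbour of `v₀`);
otherwise the row-minimal vertices form a kernel. -/
theorem exists_isKernelOn_digraph (hr : (fun v => (r v, φ v)).Injective) (A : Finset V) :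
    ∃ S : Finset V, IsKernelOn (digraph r c φ) ↑A ↑S := by
  classical
  induction A using Finset.strongInduction with
  | H A ih =>
  set rowMin : V → Prop := fun v => ∀ u ∈ A, r u = r v → φ v ≤ φ u
  by_cases hdel : ∃ v₀ ∈ A, rowMin v₀ ∧ ∃ u ∈ A, u ≠ v₀ ∧ c u = c v₀ ∧ φ u < φ v₀
  · obtain ⟨v₀, hv₀, hmin, u, hu, hne, hcu, hφu⟩ := hdel
    obtain ⟨S, hSA, hSind, hSabs⟩ := ih (A.erase u) (erase_ssubset hu)
    refine ⟨S, hSA.trans (by simp), hSind, fun v hv hvS => ?_⟩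
    by_cases hvu : v = u
    · subst hvu
      by_cases hv₀S : v₀ ∈ S
      · exact ⟨v₀, hv₀S, hne, .inr ⟨hcu, hφu⟩⟩
      obtain ⟨s, hsS, -, hs⟩ := hSabs v₀ (by simp [hv₀, hne.symm]) hv₀S
      have hsA : s ∈ A := mem_of_mem_erase (hSA hsS)
      rcases hs with ⟨hrs, hlt⟩ | ⟨hcs, hlt⟩
      · exact absurd (hmin s hsA hrs.symm) hlt.not_ge
      · exact ⟨s, hsS, (ne_of_mem_erase (hSA hsS)).symm, .inr ⟨hcu.trans hcs, hφu.trans hlt⟩⟩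
    · exact hSabs v (by simp [hvu, hv]) hvS
  · push Not at hdel
    refine ⟨{v ∈ A | rowMin v}, coe_subset.2 (filter_subset _ _), ?_, fun v hv hvS => ?_⟩
    · rintro x hx y hy ⟨hne, ⟨hrxy, hlt⟩ | ⟨hcxy, hlt⟩⟩
      · exact absurd ((mem_filter.1 hx).2 y (mem_filter.1 hy).1 hrxy.symm) hlt.not_ge
      · obtain ⟨hyA, hymin⟩ := mem_filter.1 hy
        exact absurd hlt (hdel y hyA hymin x (mem_filter.1 hx).1 hne hcxy).not_gt
    · obtain ⟨s, hs, hsmin⟩ := exists_min_image {u ∈ A | r u = r v} φ ⟨v, by simpa using hv⟩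
      obtain ⟨hsA, hsr⟩ := mem_filter.1 hs
      have hsRowMin : rowMin s := fun u hu hur => hsmin u (mem_filter.2 ⟨hu, hur.trans hsr⟩)
      have hvs : v ≠ s := by rintro rfl; exact hvS (by simpa using ⟨hv, hsRowMin⟩)
      have hlt : φ s < φ v := (hsmin v (by simpa using hv)).lt_of_ne
        fun h => hvs (hr (Prod.ext hsr h)).symm
      exact ⟨s, by simpa using ⟨hsA, hsRowMin⟩, hvs, .inl ⟨hsr.symm, hlt⟩⟩

theorem kernelPerfect_digraph [Finite V] (hr : (fun v => (r v, φ v)).Injective) :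
    KernelPerfect (digraph r c φ) := fun A => by
  obtain ⟨S, hS⟩ := exists_isKernelOn_digraph (c := c) hr A.toFinite.toFinset
  exact ⟨S, by simpa using hS⟩

open Classical in
theorem card_digraph_lt [Fintype V] (hr : (fun v => (r v, φ v)).Injective)
    (hc : (fun v => (c v, φ v)).Injective) {k : ℕ} (hφ : ∀ v, φ v < k) (v : V) :
    #{w | digraph r c φ v w} < k := by
  set rowBelow : Finset V := {w | r w = r v ∧ φ w < φ v}
  set colAbove : Finset V := {w | c w = c v ∧ φ v < φ w}
  have hrow : #rowBelow ≤ #(range (φ v)) :=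
    card_le_card_of_injOn φ (fun w hw => by simp_all [rowBelow])
      fun x hx y hy h => hr (Prod.ext (by simp_all [rowBelow]) h)
  have hcol : #colAbove ≤ #(Ioo (φ v) k) :=
    card_le_card_of_injOn φ (fun w hw => by simp_all [colAbove])
      fun x hx y hy h => hc (Prod.ext (by simp_all [colAbove]) h)
  have hsub : ({w | digraph r c φ v w} : Finset V) ⊆ rowBelow ∪ colAbove := by
    intro w hw
    obtain ⟨-, -, ⟨h, hlt⟩ | ⟨h, hlt⟩⟩ := mem_filter.1 hw
    · exact mem_union_left _ (mem_filter.2 ⟨mem_univ _, h.symm, hlt⟩)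
    · exact mem_union_right _ (mem_filter.2 ⟨mem_univ _, h.symm, hlt⟩)
  have := (card_le_card hsub).trans (card_union_le _ _)
  have := hφ v
  simp only [card_range, Nat.card_Ioo] at hrow hcol
  omega

theorem choosable [Fintype V] {G : SimpleGraph V} (hr : (fun v => (r v, φ v)).Injective)
    (hc : (fun v => (c v, φ v)).Injective) {k : ℕ} (hφ : ∀ v, φ v < k)
    (hG : ∀ x y, G.Adj x y → r x = r y ∨ c x = c y) : Choosable G k := by
  classical
  exact choosable_of_kernelPerfect (kernelPerfect_digraph hr)
    (fun x y hxy => digraph_or_digraph hr hc hxy.ne (hG x y hxy)) (card_digraph_lt hr hc hφ)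

end RowCol

section ListColoring

variable {G : SimpleGraph V}

theorem Choosable.colorable {k : ℕ} (h : Choosable G k) : G.Colorable k := by
  obtain ⟨col, hcol, hproper⟩ := h (fun _ => range k) (fun _ => card_range k)
  exact ⟨Coloring.mk (fun v => ⟨col v, mem_range.1 (hcol v)⟩)
    fun hxy h => hproper hxy (congrArg Fin.val h)⟩

theorem choiceNumber_eq_of_isClique {s : Finset V} (hs : G.IsClique s) (h : Choosable G #s) :
    choiceNumber G = #s :=
  le_antisymm (Nat.sInf_le h) (le_csInf ⟨_, h⟩ fun _ hk => hs.card_le_of_colorable hk.colorable)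

theorem chromaticNumber_eq_of_isClique {s : Finset V} (hs : G.IsClique s)
    (h : Choosable G #s) : G.chromaticNumber = #s :=
  le_antisymm h.colorable.chromaticNumber_le hs.card_le_chromaticNumber

end ListColoring

theorem Nat.eq_of_modEq_of_div_eq {a b p q : ℕ} (hp : 0 < p) (hpq : p ≤ q)
    (hmod : a ≡ b [MOD q]) (hdiv : a / p = b / p) : a = b := by
  have ha := Nat.div_add_mod a p
  have hb := Nat.div_add_mod b p
  have := Nat.mod_lt a hp
  have := Nat.mod_lt b hp
  rw [hdiv] at ha
  refine hmod.eq_of_abs_lt (abs_sub_lt_iff.2 ⟨?_, ?_⟩) <;> omega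

theorem Nat.exists_forall_prime_dvd_eq_minFac_or_eq {n : ℕ} (hn : 1 < n)
    (h : #n.primeFactors ≤ 2) :
    ∃ q, n.minFac ≤ q ∧ ∀ t, t.Prime → t ∣ n → t = n.minFac ∨ t = q := by
  have hmem : n.minFac ∈ n.primeFactors :=
    Nat.mem_primeFactors.2 ⟨Nat.minFac_prime hn.ne', Nat.minFac_dvd n, by omega⟩
  obtain ⟨q, hq⟩ := card_le_one_iff_subset_singleton.1
    (show #(n.primeFactors.erase n.minFac) ≤ 1 by rw [card_erase_of_mem hmem]; omega)
  refine ⟨max n.minFac q, le_max_left _ _, fun t ht htn => or_iff_not_imp_left.2 fun htp => ?_⟩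
  obtain rfl : t = q :=
    mem_singleton.1 (hq (mem_erase.2 ⟨htp, Nat.mem_primeFactors.2 ⟨ht, htn, by omega⟩⟩))
  exact (max_eq_right (Nat.minFac_le_of_dvd ht.two_le htn)).symm

theorem ZMod.dvd_val_sub_iff_modEq {n t : ℕ} [NeZero n] (ht : t ∣ n) (x y : ZMod n) :
    t ∣ (x - y).val ↔ x.val ≡ y.val [MOD t] := by
  rw [← ZMod.natCast_eq_zero_iff _ t, ← ZMod.natCast_eq_natCast_iff, ZMod.natCast_val,
    ZMod.natCast_val, ZMod.natCast_val, ZMod.cast_sub ht, sub_eq_zero]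

theorem compl_unitaryCayley_adj_iff {n : ℕ} [NeZero n] {x y : ZMod n} :
    (unitaryCayley n)ᶜ.Adj x y ↔ x ≠ y ∧ ∃ t, t.Prime ∧ t ∣ n ∧ x.val ≡ y.val [MOD t] := by
  have hunit : IsUnit (x - y) ↔ (x - y).val.Coprime n := by
    rw [← ZMod.isUnit_iff_coprime, ZMod.natCast_zmod_val]
  simp only [compl_adj, unitaryCayley, hunit]
  refine and_congr_right fun hxy => ?_
  rw [not_and, iff_true_intro hxy, true_imp_iff, Nat.Prime.not_coprime_iff_dvd]
  refine exists_congr fun t => and_congr_right fun _ => ?_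
  exact ⟨fun ⟨h, htn⟩ => ⟨htn, (ZMod.dvd_val_sub_iff_modEq htn x y).1 h⟩,
    fun ⟨htn, h⟩ => ⟨(ZMod.dvd_val_sub_iff_modEq htn x y).2 h, htn⟩⟩

theorem exists_isClique_compl_unitaryCayley {n p : ℕ} [NeZero n] (hp : p.Prime) (hpn : p ∣ n) :
    ∃ s : Finset (ZMod n), (unitaryCayley n)ᶜ.IsClique ↑s ∧ #s = n / p := by
  have hval : ∀ i ∈ range (n / p), ((p * i : ℕ) : ZMod n).val = p * i := fun i hi =>
    ZMod.val_cast_of_lt <| calc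
      p * i < p * (n / p) := Nat.mul_lt_mul_of_pos_left (mem_range.1 hi) hp.pos
      _ = n := Nat.mul_div_cancel' hpn
  refine ⟨(range (n / p)).image fun i => ((p * i : ℕ) : ZMod n), ?_, ?_⟩
  · simp only [coe_image]
    rintro _ ⟨i, hi, rfl⟩ _ ⟨j, hj, rfl⟩ hij
    refine compl_unitaryCayley_adj_iff.2 ⟨hij, p, hp, hpn, ?_⟩
    rw [hval i hi, hval j hj]
    simp [Nat.ModEq]
  · rw [card_image_of_injOn, card_range]
    intro i hi j hj h
    refine Nat.eq_of_mul_eq_mul_left hp.pos ?_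
    rw [← hval i hi, ← hval j hj]
    exact congrArg ZMod.val h

theorem stmt_15_general (n : ℕ) (hn : 1 < n)
    (hpf : n.primeFactors.card ≤ 2) :
    choiceNumber ((unitaryCayley n)ᶜ) = n / n.minFac ∧
      ((unitaryCayley n)ᶜ).chromaticNumber = ((n / n.minFac : ℕ) : ℕ∞) := by
  have : NeZero n := ⟨by omega⟩
  set p := n.minFac
  have hp : p.Prime := Nat.minFac_prime hn.ne'
  obtain ⟨q, hpq, hprimes⟩ := Nat.exists_forall_prime_dvd_eq_minFac_or_eq hn hpf
  obtain ⟨s, hs, hcard⟩ := exists_isClique_compl_unitaryCayley hp (Nat.minFac_dvd n)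
  have hinj : ∀ {m}, p ≤ m → (fun x : ZMod n => (x.val % m, x.val / p)).Injective :=
    fun hpm _ _ h => ZMod.val_injective n <|
      Nat.eq_of_modEq_of_div_eq hp.pos hpm (Prod.ext_iff.1 h).1 (Prod.ext_iff.1 h).2
  have hchoos : Choosable (unitaryCayley n)ᶜ #s := by
    refine RowCol.choosable (hinj le_rfl) (hinj hpq)
      (fun x => hcard ▸ Nat.div_lt_div_of_lt_of_dvd (Nat.minFac_dvd n) x.val_lt)
      fun x y hxy => ?_
    obtain ⟨-, t, ht, htn, hxy⟩ := compl_unitaryCayley_adj_iff.1 hxy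
    rcases hprimes t ht htn with rfl | rfl
    exacts [.inl hxy, .inr hxy]
  rw [← hcard]
  exact ⟨choiceNumber_eq_of_isClique hs hchoos, chromaticNumber_eq_of_isClique hs hchoos⟩

/-- for odd `n > 1` with at most two distinct prime divisors, the
complement of the unitary Cayley graph satisfies `ch(G) = χ(G) = n / p`. -/
theorem stmt_15 (n : ℕ) (hn : 1 < n) (hodd : Odd n)
    (hpf : n.primeFactors.card ≤ 2) :
    choiceNumber ((unitaryCayley n)ᶜ) = n / n.minFac ∧
      ((unitaryCayley n)ᶜ).chromaticNumber = ((n / n.minFac : ℕ) : ℕ∞) :=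
  stmt_15_general n hn hpf
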